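/- arXiv:2008.06864 — 10 statements merged into one kernel-verified Lean document; each statement's English description precedes it below -/
import Mathlib

section
/- Every positive integer antipalindromic in base b is divisible by (b-1)/2 when b is odd, and by b-1 when b is even. -/
/-- `m` is antipalindromic in base `b`: its base-`b` digits `a_0, ..., a_n`
(little-endian, `a_n ≠ 0` automatic from `Nat.digits`) satisfy
`a_j = b - 1 - a_{n-j}` for all `j`. -/
def Antipal (b m : ℕ) : Prop :=
  ∀ i < (Nat.digits b m).length,
    (Nat.digits b m).getD i 0 =
      b - 1 - (Nat.digits b m).getD ((Nat.digits b m).length - 1 - i) 0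

lemma sum_getD' (l : List ℕ) : l.sum = ∑ i ∈ Finset.range l.length, l.getD i 0 := by
  induction l with
  | nil => simp
  | cons a t ih =>
      simp [Finset.sum_range_succ', ih, List.getD, Nat.add_comm]

theorem stmt_5 (b m : ℕ) (hb : 2 ≤ b) (hm : 0 < m) (ha : Antipal b m) :
    (Odd b → (b - 1) / 2 ∣ m) ∧ (Even b → (b - 1) ∣ m) := by
  rcases eq_or_lt_of_le hb with hb2 | hb3
  · refine ⟨fun ho => absurd ho (by rw [← hb2]; decide), fun _ => by rw [← hb2]; simp⟩
  -- now b ≥ 3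
  set l := Nat.digits b m with hl
  set L := l.length with hL
  set S := l.sum with hS
  have hdig : ∀ i < L, l.getD i 0 ≤ b - 1 := by
    intro i hi
    have h1 : l.getD i 0 = l[i] := List.getD_eq_getElem l 0 hi
    have h2 : l[i] ∈ l := List.getElem_mem hi
    have := Nat.digits_lt_base (by omega) h2
    omega
  have hpair : ∀ i < L, l.getD i 0 + l.getD (L - 1 - i) 0 = b - 1 := by
    intro i hi
    have h1 := ha i hi
    rw [← hl, ← hL] at h1
    have h2 : L - 1 - i < L := by omega
    have := hdig _ h2
    omega
  have h2S : 2 * S = L * (b - 1) := by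
    have hrev : ∑ i ∈ Finset.range L, l.getD (L - 1 - i) 0
        = ∑ i ∈ Finset.range L, l.getD i 0 :=
      Finset.sum_range_reflect (fun i => l.getD i 0) L
    have : ∑ i ∈ Finset.range L, (l.getD i 0 + l.getD (L - 1 - i) 0)
        = ∑ i ∈ Finset.range L, (b - 1) :=
      Finset.sum_congr rfl fun i hi => hpair i (Finset.mem_range.mp hi)
    rw [Finset.sum_add_distrib, hrev] at this
    rw [two_mul, hS, sum_getD', ← hL, this]
    simp [Nat.mul_comm]
  have hmod : m ≡ S [MOD b - 1] := by
    have h1 : b % (b - 1) = 1 := by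
      rw [Nat.mod_eq_sub_mod (by omega), Nat.sub_sub_self (by omega : 1 ≤ b),
        Nat.mod_eq_of_lt (by omega)]
    exact Nat.modEq_digits_sum (b - 1) b h1 m
  constructor
  · intro ho
    have hdvd2 : 2 ∣ b - 1 := by rcases ho with ⟨k, hk⟩; omega
    obtain ⟨d, hd⟩ := hdvd2
    have hSd : S = L * d := by
      have h : 2 * S = 2 * (L * d) := by rw [h2S, hd]; ring
      omega
    have hdS : d ∣ S := ⟨L, by rw [hSd]; ring⟩
    have hq : (b - 1) / 2 = d := by omega
    rw [hq]
    have hmd : m ≡ S [MOD d] := hmod.of_dvd ⟨2, by omega⟩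
    exact (Nat.modEq_zero_iff_dvd).mp (hmd.trans ((Nat.modEq_zero_iff_dvd).mpr hdS))
  · intro he
    have hodd : ¬ 2 ∣ b - 1 := by rcases he with ⟨k, hk⟩; omega
    have hdvd : (b - 1) ∣ 2 * S := ⟨L, by rw [h2S]; ring⟩
    have hcop : Nat.Coprime 2 (b - 1) :=
      (Nat.Prime.coprime_iff_not_dvd Nat.prime_two).mpr hodd
    have hS' : (b - 1) ∣ S := (Nat.Coprime.dvd_of_dvd_mul_left hcop.symm hdvd)
    exact (Nat.modEq_zero_iff_dvd).mp (hmod.trans ((Nat.modEq_zero_iff_dvd).mpr hS'))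
end

section
/- Let b > 3. If p is a prime that is antipalindromic in base b, then p = (b-1)/2 (in particular, b is odd and there is at most one antipalindromic prime in base b). -/
theorem stmt_6 (b p : ℕ) (hb : 3 < b) (hp : p.Prime) (ha : Antipal b p) :
    p = (b - 1) / 2 := by
  set L := Nat.digits b p with hL
  -- digits are < b
  have hdig : ∀ i, L.getD i 0 < b := by
    intro i
    rcases lt_or_ge i L.length with h | h
    · rw [List.getD_eq_getElem L 0 h]
      exact Nat.digits_lt_base (by omega) (List.getElem_mem h)
    · rw [List.getD_eq_default L 0 h]; omega
  -- express sum as Finset sum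
  have hsum : L.sum = ∑ i ∈ Finset.range L.length, L.getD i 0 := by
    conv_lhs => rw [← List.ofFn_get L]
    rw [List.sum_ofFn, ← Fin.sum_univ_eq_sum_range (fun i => L.getD i 0) L.length]
    apply Finset.sum_congr rfl
    intro i _
    rw [List.getD_eq_getElem L 0 i.isLt]
    rfl
  -- pair sums
  have hpair : ∀ i < L.length, L.getD i 0 + L.getD (L.length - 1 - i) 0 = b - 1 := by
    intro i hi
    have h1 := ha i hi
    rw [← hL] at h1
    have h2 : L.getD (L.length - 1 - i) 0 < b := hdig _
    omega
  -- 2 * sum = len * (b-1)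
  have h2S : 2 * L.sum = L.length * (b - 1) := by
    have hrefl := Finset.sum_range_reflect (fun j => L.getD j 0) L.length
    have hstep : 2 * L.sum = ∑ i ∈ Finset.range L.length,
        (L.getD i 0 + L.getD (L.length - 1 - i) 0) := by
      rw [Finset.sum_add_distrib, hrefl, hsum]; ring
    rw [hstep, Finset.sum_congr rfl fun i hi => hpair i (Finset.mem_range.mp hi),
      Finset.sum_const, Finset.card_range, smul_eq_mul]
  -- b-1 divides 2p
  have hmod : p ≡ L.sum [MOD b - 1] := by
    have hb1 : b % (b - 1) = 1 := by
      obtain ⟨c, rfl⟩ : ∃ c, b = c + 1 := ⟨b - 1, by omega⟩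
      simp only [Nat.add_sub_cancel]
      rw [Nat.add_mod_left]
      exact Nat.mod_eq_of_lt (by omega)
    have := Nat.modEq_digits_sum (b - 1) b hb1 p
    rwa [← hL] at this
  have hdvd : (b - 1) ∣ 2 * p := by
    have h1 : 2 * p ≡ 2 * L.sum [MOD b - 1] := hmod.mul_left 2
    have h2 : (b - 1) ∣ 2 * L.sum := by rw [h2S]; exact Dvd.intro_left _ rfl
    exact (Nat.modEq_zero_iff_dvd).mp (h1.trans ((Nat.modEq_zero_iff_dvd).mpr h2))
  -- rule out p = b - 1
  have hne : p ≠ b - 1 := by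
    intro h
    have hplt : p < b := by omega
    have hd2 : Nat.digits b p = [p] := by
      rw [Nat.digits_def' (by omega : 1 < b) hp.pos,
        Nat.mod_eq_of_lt hplt, Nat.div_eq_of_lt hplt, Nat.digits_zero]
    have h0 := ha 0 (by rw [hd2]; simp)
    rw [hd2] at h0
    simp at h0
    omega
  -- conclude using primality
  rcases Nat.coprime_or_dvd_of_prime hp (b - 1) with hc | hc
  · have h2 : (b - 1) ∣ 2 := (hc.symm).dvd_of_dvd_mul_right hdvd
    have := Nat.le_of_dvd (by omega) h2
    omega
  · obtain ⟨k, hk⟩ := hc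
    obtain ⟨c, hc2⟩ := hdvd
    rw [hk] at hc2
    have hkc : k * c = 2 := by
      have hp0 : 0 < p := hp.pos
      have : p * (k * c) = p * 2 := by rw [← mul_assoc, ← hc2]; ring
      have := Nat.eq_of_mul_eq_mul_left hp0 this
      omega
    have hk0 : k ≠ 0 := by rintro rfl; omega
    have hk1 : k ≠ 1 := by rintro rfl; simp at hk; omega
    have hk2 : k = 2 := by
      rcases Nat.le_of_dvd (by omega) ⟨c, hkc.symm⟩ with h
      omega
    rw [hk2] at hk
    omega
end

section
/- Every prime p > 3 that is antipalindromic in base 3 satisfies p ≡ 1 (mod 6). -/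
theorem stmt_10 (p : ℕ) (hp : p.Prime) (hp3 : 3 < p) (ha : Antipal 3 p) :
    p % 6 = 1 := by
  have hp0 : p ≠ 0 := by omega
  have hne : Nat.digits 3 p ≠ [] := Nat.digits_ne_nil_iff_ne_zero.mpr hp0
  have hlen : 0 < (Nat.digits 3 p).length := List.length_pos_iff.mpr hne
  have h0 := ha 0 hlen
  -- first digit is p % 3
  have hd : Nat.digits 3 p = p % 3 :: Nat.digits 3 (p / 3) :=
    Nat.digits_def' (by norm_num) (by omega)
  have hfirst : (Nat.digits 3 p).getD 0 0 = p % 3 := by rw [hd]; rfl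
  -- last digit
  set L := (Nat.digits 3 p).length with hL
  have hlt : (Nat.digits 3 p).length - 1 - 0 < L := by omega
  have hlast_eq : (Nat.digits 3 p).getD ((Nat.digits 3 p).length - 1 - 0) 0 =
      (Nat.digits 3 p).getLast hne := by
    rw [List.getLast_eq_getElem, List.getD_eq_getElem _ _ (by omega)]
    simp
  have hlast_ne : (Nat.digits 3 p).getLast hne ≠ 0 := Nat.getLast_digit_ne_zero 3 hp0
  have hlast_lt : (Nat.digits 3 p).getLast hne < 3 :=
    Nat.digits_lt_base (by norm_num) (List.getLast_mem hne)
  rw [hfirst, hlast_eq] at h0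
  -- p % 3 = 2 - last ∈ {0, 1}; p prime > 3 rules out p % 3 = 0
  have hp3ne : p % 3 ≠ 0 := by
    intro h
    have : (3 : ℕ) ∣ p := Nat.dvd_of_mod_eq_zero h
    have := (Nat.Prime.eq_one_or_self_of_dvd hp 3 this)
    omega
  have hodd : p % 2 = 1 := by
    rcases hp.eq_two_or_odd with h | h
    · omega
    · exact h
  omega
end

section
/- Let b = n² + 1 for a natural number n ≥ 2, and let m ∈ {2, 3, ..., n}. Then (m·n)² is antipalindromic in base b; specifically, its base-b expansion is the two-digit string (m²−1)(b−m²). -/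
theorem stmt_11 (n m : ℕ) (hn : 2 ≤ n) (hm2 : 2 ≤ m) (hmn : m ≤ n) :
    Nat.digits (n ^ 2 + 1) ((m * n) ^ 2) = [n ^ 2 + 1 - m ^ 2, m ^ 2 - 1] ∧
      Antipal (n ^ 2 + 1) ((m * n) ^ 2) := by
  set b := n ^ 2 + 1 with hb
  have hm2le : m ^ 2 ≤ n ^ 2 := Nat.pow_le_pow_left hmn 2
  have hm4 : 4 ≤ m ^ 2 := by nlinarith
  have hbge : 2 ≤ b := by omega
  have hx : (m * n) ^ 2 = (m ^ 2 - 1) * b + (b - m ^ 2) := by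
    have h : (m * n) ^ 2 = m ^ 2 * n ^ 2 := by ring
    rw [h, hb]
    zify [show 1 ≤ m ^ 2 by omega, show m ^ 2 ≤ n ^ 2 + 1 by omega]
    ring
  have hdig : Nat.digits b ((m * n) ^ 2) = [b - m ^ 2, m ^ 2 - 1] := by
    rw [hx, Nat.digits_def' (by omega : 1 < b) (by omega)]
    have h1 : ((m ^ 2 - 1) * b + (b - m ^ 2)) % b = b - m ^ 2 := by
      rw [Nat.add_comm, Nat.add_mul_mod_self_right]; exact Nat.mod_eq_of_lt (by omega)
    have h2 : ((m ^ 2 - 1) * b + (b - m ^ 2)) / b = m ^ 2 - 1 := by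
      rw [Nat.add_comm, Nat.add_mul_div_right _ _ (by omega : 0 < b), Nat.div_eq_of_lt (by omega), Nat.zero_add]
    rw [h1, h2, Nat.digits_def' (by omega : 1 < b) (by omega),
      Nat.mod_eq_of_lt (by omega), Nat.div_eq_of_lt (by omega), Nat.digits_zero]
  refine ⟨hdig, ?_⟩
  intro i hi
  rw [hdig] at hi ⊢
  simp only [List.length_cons, List.length_nil] at hi
  interval_cases i <;> simp <;> omega
end

section
/- Let b = n^k + 1 where n, k are natural numbers with k ≥ 2 and n ≥ 2, and let m ∈ {2, 3, ..., n}. Then (m·n)^k is antipalindromic in base b; specifically, its base-b expansion is the two-digit string (m^k − 1)(b − m^k). -/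
theorem stmt_12 (n k m : ℕ) (hn : 2 ≤ n) (hk : 2 ≤ k) (hm2 : 2 ≤ m) (hmn : m ≤ n) :
    Nat.digits (n ^ k + 1) ((m * n) ^ k) = [n ^ k + 1 - m ^ k, m ^ k - 1] ∧
      Antipal (n ^ k + 1) ((m * n) ^ k) := by
  set a := m ^ k with ha
  set c := n ^ k with hc
  have hac : a ≤ c := Nat.pow_le_pow_left hmn k
  have ha2 : 2 ≤ a := le_trans hm2 (Nat.le_self_pow (by omega) m)
  have hb : 1 < c + 1 := by
    have : 2 ≤ c := le_trans hn (Nat.le_self_pow (by omega) n)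
    omega
  have key : (m * n) ^ k = (c + 1 - a) + (c + 1) * (a - 1) := by
    rw [mul_pow, ← ha, ← hc]
    zify [hac, show 1 ≤ a by omega, show a ≤ c + 1 by omega]
    ring
  have hrlt : c + 1 - a < c + 1 := by omega
  have hdig : Nat.digits (c + 1) ((m * n) ^ k) = [c + 1 - a, a - 1] := by
    rw [key, Nat.digits_def' hb (by omega)]
    rw [Nat.add_mul_mod_self_left, Nat.mod_eq_of_lt hrlt,
      Nat.add_mul_div_left _ _ (by omega : 0 < c + 1), Nat.div_eq_of_lt hrlt, zero_add]
    rw [Nat.digits_def' hb (by omega)]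
    rw [Nat.mod_eq_of_lt (by omega), Nat.div_eq_of_lt (by omega), Nat.digits_zero]
  refine ⟨hdig, ?_⟩
  intro i hi
  rw [hdig] at hi ⊢
  simp only [List.length_cons, List.length_nil] at hi
  interval_cases i <;> simp <;> omega
end

section
/- For integers m > 1 and odd k > 1, if b ≥ C(k, (k-1)/2) · m^k, then the number [m·(b−1)]^k is antipalindromic in base b; its base-b expansion has digits alternating between m^k·C(k,i) − 1 and b − m^k·C(k,i). -/
open Finset

lemma ofDigits_ofFn (b : ℤ) : ∀ (n : ℕ) (f : ℕ → ℕ),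
    Nat.ofDigits b (List.ofFn (fun i : Fin n => f i)) =
      ∑ i ∈ Finset.range n, (f i : ℤ) * b ^ i := by
  intro n
  induction n with
  | zero => intro f; simp [Nat.ofDigits]
  | succ n ih =>
    intro f
    rw [List.ofFn_succ]
    show Nat.ofDigits b (f 0 :: List.ofFn fun i : Fin n => f (i + 1)) = _
    rw [Nat.ofDigits, ih (fun i => f (i + 1)), Finset.sum_range_succ', Finset.mul_sum]
    simp [mul_comm, mul_assoc, mul_left_comm, pow_succ]
    ring_nf

lemma esum (B : ℤ) : ∀ n : ℕ,
    ∑ i ∈ Finset.range (2 * n), (if i % 2 = 1 then (-1 : ℤ) else B) * B ^ i = 0 := by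
  intro n
  induction n with
  | zero => simp
  | succ n ih =>
    have h2 : 2 * (n + 1) = (2 * n + 1) + 1 := by ring
    rw [h2, Finset.sum_range_succ, Finset.sum_range_succ, ih]
    have h1 : (2 * n) % 2 = 0 := by omega
    have h3 : (2 * n + 1) % 2 = 1 := by omega
    rw [h1, h3]
    simp
    ring

theorem digits_aux (m k b : ℕ) (hm : 1 < m) (hk : 1 < k) (hkodd : Odd k)
    (hb : k.choose ((k - 1) / 2) * m ^ k ≤ b) :
      Nat.digits b ((m * (b - 1)) ^ k) =
        List.ofFn (fun i : Fin (k + 1) =>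
          if (i : ℕ) % 2 = 1 then m ^ k * k.choose i - 1
          else b - m ^ k * k.choose i) := by
  obtain ⟨t, ht⟩ := hkodd
  have hkm : k % 2 = 1 := by omega
  set M := m ^ k with hM
  set f : ℕ → ℕ := fun i =>
      if i % 2 = 1 then M * k.choose i - 1 else b - M * k.choose i with hf
  have hM4 : 4 ≤ M := by
    calc (4:ℕ) = 2 ^ 2 := by norm_num
    _ ≤ m ^ 2 := Nat.pow_le_pow_left hm 2
    _ ≤ m ^ k := Nat.pow_le_pow_right (by omega) hk
  have hMCpos : ∀ i, i ≤ k → 1 ≤ M * k.choose i := by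
    intro i hi
    have := Nat.choose_pos hi
    exact Nat.one_le_iff_ne_zero.2 (by positivity)
  have hMCb : ∀ i, M * k.choose i ≤ b := by
    intro i
    calc M * k.choose i ≤ M * k.choose (k / 2) := by
          exact Nat.mul_le_mul_left M (Nat.choose_le_middle i k)
    _ = k.choose ((k - 1) / 2) * M := by
          rw [mul_comm]; congr 2; omega
    _ ≤ b := hb
  have hb4 : 4 ≤ b := le_trans hM4 (le_trans (by
    have := Nat.choose_pos (show (k-1)/2 ≤ k by omega)
    calc M = 1 * M := (one_mul M).symm
    _ ≤ k.choose ((k - 1) / 2) * M := Nat.mul_le_mul_right M this) hb)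
  -- the key numeric identity
  have key : (m * (b - 1)) ^ k = Nat.ofDigits b (List.ofFn (fun i : Fin (k+1) => f i)) := by
    have hcast : (((m * (b - 1)) ^ k : ℕ) : ℤ) = (m : ℤ) ^ k * ((b : ℤ) - 1) ^ k := by
      push_cast [Nat.cast_sub (show 1 ≤ b by omega)]
      rw [mul_pow]
    apply @Nat.cast_injective ℤ _ _
    rw [Nat.coe_ofDigits ℤ, ofDigits_ofFn, hcast]
    have step : ∀ i ∈ Finset.range (k + 1),
        ((f i : ℤ)) * (b:ℤ) ^ i =
          (-1 : ℤ) ^ (i + 1) * (M : ℤ) * (k.choose i : ℤ) * (b:ℤ) ^ i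
            + (if i % 2 = 1 then (-1 : ℤ) else (b:ℤ)) * (b:ℤ) ^ i := by
      intro i hi
      rw [Finset.mem_range] at hi
      rcases Nat.even_or_odd i with he | ho
      · have h0 : i % 2 ≠ 1 := by have := Nat.even_iff.1 he; omega
        have hfi : f i = b - M * k.choose i := by simp [hf, h0]
        have hneg : (-1 : ℤ) ^ (i + 1) = -1 := (he.add_one).neg_one_pow
        rw [hfi, Nat.cast_sub (hMCb i), hneg, if_neg h0]
        push_cast
        ring
      · have h1 : i % 2 = 1 := Nat.odd_iff.1 ho
        have hfi : f i = M * k.choose i - 1 := by simp [hf, h1]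
        have hneg : (-1 : ℤ) ^ (i + 1) = 1 := (ho.add_one).neg_one_pow
        rw [hfi, Nat.cast_sub (hMCpos i (by omega)), hneg, if_pos h1]
        push_cast
        ring
    rw [Finset.sum_congr rfl step, Finset.sum_add_distrib]
    have h2 : k + 1 = 2 * (t + 1) := by omega
    rw [h2, esum (b:ℤ) (t+1), add_zero, ← h2]
    have hAP : ((-(b:ℤ)) + 1) ^ k
        = ∑ i ∈ Finset.range (k + 1), (-(b:ℤ)) ^ i * 1 ^ (k - i) * (k.choose i : ℤ) :=
      add_pow (-(b:ℤ)) 1 k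
    have : ∑ i ∈ Finset.range (k + 1),
        (-1 : ℤ) ^ (i + 1) * (M : ℤ) * (k.choose i : ℤ) * (b:ℤ) ^ i
        = -(M : ℤ) * ∑ i ∈ Finset.range (k + 1),
            (-(b:ℤ)) ^ i * 1 ^ (k - i) * (k.choose i : ℤ) := by
      rw [Finset.mul_sum]
      refine Finset.sum_congr rfl fun i _ => ?_
      rw [neg_pow, pow_succ, one_pow]
      ring
    rw [this, ← hAP]
    have hodd : Odd k := ⟨t, ht⟩
    have : ((-(b:ℤ)) + 1) ^ k = -(((b:ℤ) - 1) ^ k) := by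
      rw [show (-(b:ℤ) + 1) = -((b:ℤ) - 1) by ring, hodd.neg_pow]
    rw [this, Nat.cast_pow]
    ring
  rw [key]
  apply Nat.digits_ofDigits b (by omega)
  · intro l hl
    rw [List.mem_ofFn] at hl
    obtain ⟨i, rfl⟩ := hl
    rcases eq_or_ne ((i:ℕ) % 2) 1 with h1 | h0
    · simp only [hf, if_pos h1]
      have := hMCb (i:ℕ)
      have := hMCpos (i:ℕ) (by omega)
      omega
    · simp only [hf, if_neg h0]
      have := hMCpos (i:ℕ) (by omega)
      omega
  · intro hne
    rw [List.getLast_eq_getElem]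
    simp only [List.length_ofFn, List.getElem_ofFn]
    have hkk : (k + 1 - 1) = k := by omega
    simp only [hkk]
    have : f k = M * k.choose k - 1 := by simp [hf, hkm]
    simp only [hf]
    rw [if_pos (by simpa using hkm), Nat.choose_self]
    omega

theorem stmt_13 (m k b : ℕ) (hm : 1 < m) (hk : 1 < k) (hkodd : Odd k)
    (hb : k.choose ((k - 1) / 2) * m ^ k ≤ b) :
    Antipal b ((m * (b - 1)) ^ k) ∧
      Nat.digits b ((m * (b - 1)) ^ k) =
        List.ofFn (fun i : Fin (k + 1) =>
          if (i : ℕ) % 2 = 1 then m ^ k * k.choose i - 1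
          else b - m ^ k * k.choose i) := by
  have hd := digits_aux m k b hm hk hkodd hb
  refine ⟨?_, hd⟩
  intro i hi
  rw [hd] at hi ⊢
  simp only [List.length_ofFn] at hi ⊢
  have hik : i ≤ k := by omega
  have hkm : k % 2 = 1 := Nat.odd_iff.1 hkodd
  have hMCb : ∀ j, m ^ k * k.choose j ≤ b := by
    intro j
    calc m ^ k * k.choose j ≤ m ^ k * k.choose (k / 2) :=
          Nat.mul_le_mul_left _ (Nat.choose_le_middle j k)
    _ = k.choose ((k - 1) / 2) * m ^ k := by rw [mul_comm]; congr 2; omega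
    _ ≤ b := hb
  have hMCpos : ∀ j, j ≤ k → 1 ≤ m ^ k * k.choose j := by
    intro j hj
    have h1 := Nat.choose_pos hj
    have h2 : 0 < m ^ k := Nat.pow_pos (by omega)
    exact Nat.one_le_iff_ne_zero.2 (by positivity)
  have hlen : k + 1 - 1 - i = k - i := by omega
  rw [hlen]
  have hki : k - i < k + 1 := by omega
  rw [List.getD_eq_getElem _ _ (by simpa using hi), List.getD_eq_getElem _ _ (by simpa using hki)]
  simp only [List.getElem_ofFn]
  have hsymm : k.choose (k - i) = k.choose i := Nat.choose_symm hik
  rcases eq_or_ne (i % 2) 1 with h1 | h0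
  · have hki2 : (k - i) % 2 ≠ 1 := by omega
    rw [if_pos (by simpa using h1), if_neg (by simpa using hki2), hsymm]
    have := hMCb i
    have := hMCpos i hik
    omega
  · have hki2 : (k - i) % 2 = 1 := by omega
    rw [if_neg (by simpa using h0), if_pos (by simpa using hki2), hsymm]
    have := hMCb i
    have := hMCpos i hik
    omega
end

section
/- For every n ∈ ℕ, there exist infinitely many positive integers that are antipalindromic in at least n distinct bases. -/
lemma digits_pow_sub_one {b : ℕ} (hb : 2 ≤ b) (t : ℕ) :
    Nat.digits b (b ^ t - 1) = List.replicate t (b - 1) := by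
  induction t with
  | zero => simp
  | succ t ih =>
    have hbpos : 0 < b := by omega
    have h1 : 1 ≤ b ^ t := Nat.one_le_pow _ _ hbpos
    have hpos : 0 < b ^ (t + 1) - 1 := by
      have : b ≤ b ^ (t+1) := Nat.le_self_pow (by omega) b
      omega
    have key : b ^ (t + 1) - 1 = (b - 1) + b * (b ^ t - 1) := by
      have : b ^ (t+1) = b * b ^ t := by ring
      rw [this]
      have h2 : b * (b ^ t - 1) = b * b ^ t - b := by rw [Nat.mul_sub, mul_one]
      have h3 : b ≤ b * b ^ t := Nat.le_mul_of_pos_right b (by positivity)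
      omega
    rw [Nat.digits_def' (by omega : 1 < b) hpos, key]
    have hmod : ((b - 1) + b * (b ^ t - 1)) % b = b - 1 := by
      rw [Nat.add_mul_mod_self_left, Nat.mod_eq_of_lt (by omega)]
    have hdiv : ((b - 1) + b * (b ^ t - 1)) / b = b ^ t - 1 := by
      rw [Nat.add_mul_div_left _ _ hbpos, Nat.div_eq_of_lt (by omega)]
      omega
    rw [hmod, hdiv, ih, List.replicate_succ]

lemma digits_special {b : ℕ} (hb : 2 ≤ b) {t : ℕ} (ht : 0 < t) :
    Nat.digits b (b ^ (2 * t) - b ^ t) =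
      List.replicate t 0 ++ List.replicate t (b - 1) := by
  have h1 : 1 ≤ b ^ t := Nat.one_le_pow _ _ (by omega)
  have key : b ^ (2 * t) - b ^ t = b ^ t * (b ^ t - 1) := by
    rw [Nat.mul_sub_one, two_mul, pow_add]
  have h2 : b ≤ b ^ t := Nat.le_self_pow ht.ne' b
  rw [key, Nat.digits_base_pow_mul (by omega) (by omega),
    digits_pow_sub_one hb]

lemma antipal_special {b : ℕ} (hb : 2 ≤ b) {t : ℕ} (ht : 0 < t) :
    Antipal b (b ^ (2 * t) - b ^ t) := by
  intro i hi
  rw [digits_special hb ht] at hi ⊢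
  simp only [List.length_append, List.length_replicate] at hi ⊢
  have hlen : ∀ j, (List.replicate t 0 ++ List.replicate t (b - 1)).getD j 0
      = if j < t then 0 else if j < 2 * t then b - 1 else 0 := by
    intro j
    rcases lt_or_ge j t with h | h
    · rw [List.getD_append _ _ _ _ (by simpa using h)]
      simp [List.getD_eq_getElem?_getD, h]
    · rcases lt_or_ge j (2 * t) with h2 | h2
      · rw [List.getD_append_right _ _ _ _ (by simpa using h)]
        simp only [List.length_replicate]
        rw [List.getD_eq_getElem?_getD]
        rw [List.getElem?_replicate_of_lt (by omega)]
        simp [h, h2, Nat.not_lt.mpr h]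
      · rw [List.getD_eq_getElem?_getD, List.getElem?_append_right (by simpa using h)]
        simp only [List.length_replicate]
        rw [List.getElem?_replicate]
        simp [Nat.not_lt.mpr h, Nat.not_lt.mpr h2, if_neg (by omega : ¬ j - t < t)]
  rw [hlen, hlen]
  have h2t : t + t - 1 - i = 2 * t - 1 - i := by omega
  rcases lt_or_ge i t with h | h
  · have : ¬ (t + t - 1 - i < t) := by omega
    have h3 : t + t - 1 - i < 2 * t := by omega
    simp [h, this, h3]
  · have h2 : i < 2 * t := by omega
    have : t + t - 1 - i < t := by omega
    simp [Nat.not_lt.mpr h, h2, this]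

theorem stmt_16 (n : ℕ) :
    ∀ N : ℕ, ∃ m : ℕ, N < m ∧ ∃ S : Finset ℕ,
      n ≤ S.card ∧ ∀ b ∈ S, 2 ≤ b ∧ Antipal b m := by
  intro N
  set t : ℕ := 2 ^ n * (N + 1) with ht
  have htpos : 0 < t := by positivity
  refine ⟨2 ^ (2 * t) - 2 ^ t, ?_, (Finset.range n).image (fun i => 2 ^ (2 ^ i)), ?_, ?_⟩
  · have h1 : t < 2 ^ t := Nat.lt_two_pow_self
    have h2 : 2 ≤ 2 ^ t := by
      calc 2 = 2 ^ 1 := rfl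
      _ ≤ 2 ^ t := Nat.pow_le_pow_right (by norm_num) (by omega)
    have e : 2 ^ (2 * t) = 2 ^ t * 2 ^ t := by rw [two_mul, pow_add]
    have h3 : 2 * 2 ^ t ≤ 2 ^ t * 2 ^ t := Nat.mul_le_mul_right _ h2
    have hN : N < t := by
      have : N + 1 ≤ 2 ^ n * (N + 1) := Nat.le_mul_of_pos_left _ (by positivity)
      omega
    omega
  · rw [Finset.card_image_of_injective _ ?_, Finset.card_range]
    intro a b hab
    simpa using Nat.pow_right_injective (le_refl 2)
      (Nat.pow_right_injective (le_refl 2) hab)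
  · intro b hb
    simp only [Finset.mem_image, Finset.mem_range] at hb
    obtain ⟨i, hin, rfl⟩ := hb
    have h2b : 2 ≤ 2 ^ 2 ^ i := by
      calc 2 = 2 ^ 1 := rfl
      _ ≤ 2 ^ 2 ^ i := Nat.pow_le_pow_right (by norm_num) (Nat.one_le_pow _ _ (by norm_num))
    refine ⟨h2b, ?_⟩
    -- 2 ^ (2t) - 2 ^ t = (2^(2^i))^(2*s) - (2^(2^i))^s where s = t / 2^i
    have hdvd : 2 ^ i ∣ t := by
      rw [ht]
      exact Dvd.dvd.mul_right (pow_dvd_pow 2 (by omega)) _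
    obtain ⟨s, hs⟩ := hdvd
    have hspos : 0 < s := by
      rcases Nat.eq_zero_or_pos s with h | h
      · simp [h] at hs; omega
      · exact h
    have e1 : 2 ^ (2 * t) = (2 ^ (2 ^ i)) ^ (2 * s) := by
      rw [← pow_mul, hs]; congr 1; ring
    have e2 : 2 ^ t = (2 ^ (2 ^ i)) ^ s := by
      rw [← pow_mul, hs]
    rw [e1, e2]
    exact antipal_special h2b hspos
end

section
/- For every integer b ≥ 2, there exists a positive integer m that is antipalindromic in base b and also antipalindromic in at least one other base strictly less than m. (For b ≥ 4, m = 4(b−1) works, being antipalindromic in bases b and 2b−1; for b = 2, m = 12 works with bases 2 and 4; for b = 3, m = 72 works with bases 3 and 9.) -/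
lemma two_digits (b d1 d2 : ℕ) (hb : 1 < b) (h1 : d1 < b) (h2 : 0 < d2)
    (h2' : d2 < b) : Nat.digits b (d1 + d2 * b) = [d1, d2] := by
  have hpos : 0 < d1 + d2 * b := by positivity
  rw [Nat.digits_def' hb hpos]
  have hm : (d1 + d2 * b) % b = d1 := by
    rw [Nat.add_mul_mod_self_right, Nat.mod_eq_of_lt h1]
  have hd : (d1 + d2 * b) / b = d2 := by
    rw [Nat.add_mul_div_right _ _ (by omega), Nat.div_eq_of_lt h1, zero_add]
  rw [hm, hd, Nat.digits_def' hb h2, Nat.mod_eq_of_lt h2',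
    Nat.div_eq_of_lt h2', Nat.digits_zero]

lemma antipal_two (b d1 d2 : ℕ) (hb : 1 < b) (h1 : d1 < b) (h2 : 0 < d2)
    (h2' : d2 < b) (e1 : d1 = b - 1 - d2) (e2 : d2 = b - 1 - d1) :
    Antipal b (d1 + d2 * b) := by
  intro i hi
  rw [two_digits b d1 d2 hb h1 h2 h2'] at *
  simp only [List.length_cons, List.length_nil] at hi
  interval_cases i <;> simpa

theorem stmt_17 (b : ℕ) (hb : 2 ≤ b) :
    ∃ m : ℕ, 0 < m ∧ Antipal b m ∧
      ∃ c : ℕ, 2 ≤ c ∧ c ≠ b ∧ c < m ∧ Antipal c m := by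
  match b, hb with
  | 2, _ => exact ⟨12, by norm_num, by intro i hi; have h : Nat.digits 2 12 = [0,0,1,1] := (by simp); rw [h] at hi ⊢; simp only [List.length_cons, List.length_nil] at hi ⊢; interval_cases i <;> rfl, 4, by norm_num, by omega, by omega, by intro i hi; have h : Nat.digits 4 12 = [0,3] := (by simp); rw [h] at hi ⊢; simp only [List.length_cons, List.length_nil] at hi ⊢; interval_cases i <;> rfl⟩
  | 3, _ => exact ⟨72, by norm_num, by intro i hi; have h : Nat.digits 3 72 = [0,0,2,2] := (by simp); rw [h] at hi ⊢; simp only [List.length_cons, List.length_nil] at hi ⊢; interval_cases i <;> rfl, 9, by norm_num, by omega, by omega, by intro i hi; have h : Nat.digits 9 72 = [0,8] := (by simp); rw [h] at hi ⊢; simp only [List.length_cons, List.length_nil] at hi ⊢; interval_cases i <;> rfl⟩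
  | (n+4), _ =>
    set b := n + 4 with hbdef
    refine ⟨4 * (b - 1), by omega, ?_, 2 * b - 1, by omega, by omega, by omega, ?_⟩
    · have h : 4 * (b - 1) = (b - 4) + 3 * b := by omega
      rw [h]
      exact antipal_two b (b - 4) 3 (by omega) (by omega) (by omega) (by omega)
        (by omega) (by omega)
    · have h : 4 * (b - 1) = (2 * b - 3) + 1 * (2 * b - 1) := by omega
      rw [h]
      exact antipal_two (2 * b - 1) (2 * b - 3) 1 (by omega) (by omega) (by omega)
        (by omega) (by omega) (by omega)
end

section
/- Let p, q be positive integers with gcd(p,q) = d, p = p'·d, q = q'·d, and suppose p ≥ q' > 1 and q ≥ p' > 1. Then the number m = p'·q'·d is antipalindromic in both base p+1 and base q+1; its expansions are (q'−1)(p+1−q') and (p'−1)(q+1−p') respectively. -/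
lemma two_digits_s17 (b a0 a1 : ℕ) (hb : 1 < b) (h0 : a0 < b) (h1 : 0 < a1)
    (h1' : a1 < b) : Nat.digits b (a1 * b + a0) = [a0, a1] := by
  rw [Nat.digits_def' hb (by positivity)]
  have hm : (a1 * b + a0) % b = a0 := by
    rw [Nat.add_comm, Nat.add_mul_mod_self_right, Nat.mod_eq_of_lt h0]
  have hdv : (a1 * b + a0) / b = a1 := by
    rw [Nat.add_div_eq_of_add_mod_lt (by rw [Nat.mul_mod_left, Nat.mod_eq_of_lt h0]; omega),
      Nat.mul_div_cancel _ (by omega : 0 < b), Nat.div_eq_of_lt h0]; omega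
  rw [hm, hdv, Nat.digits_def' hb h1, Nat.mod_eq_of_lt h1', Nat.div_eq_of_lt h1']
  simp

theorem stmt_18 (p q d p' q' : ℕ) (hd : Nat.gcd p q = d)
    (hp : p = p' * d) (hq : q = q' * d)
    (hq'1 : 1 < q') (hq'p : q' ≤ p) (hp'1 : 1 < p') (hp'q : p' ≤ q) :
    Nat.digits (p + 1) (p' * q' * d) = [p + 1 - q', q' - 1] ∧
      Nat.digits (q + 1) (p' * q' * d) = [q + 1 - p', p' - 1] ∧
      Antipal (p + 1) (p' * q' * d) ∧ Antipal (q + 1) (p' * q' * d) := by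
  have key : ∀ a b : ℕ, 1 < a → a ≤ b → a * b = (a - 1) * (b + 1) + (b + 1 - a) := by
    intro a b ha hab
    obtain ⟨c, rfl⟩ : ∃ c, a = c + 1 := ⟨a - 1, by omega⟩
    have h2 : c + (b - c) = b := by omega
    have h3 : b + 1 - (c + 1) = b - c := by omega
    simp only [Nat.add_sub_cancel, h3]
    have : c * (b + 1) + (b - c) = c * b + (c + (b - c)) := by ring
    rw [this, h2]; ring
  have e1 : p' * q' * d = q' * p := by rw [hp]; ring
  have e2 : p' * q' * d = p' * q := by rw [hq]; ring
  have h1 : Nat.digits (p + 1) (p' * q' * d) = [p + 1 - q', q' - 1] := by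
    rw [e1, key q' p hq'1 hq'p]
    exact two_digits_s17 (p + 1) (p + 1 - q') (q' - 1) (by omega) (by omega) (by omega) (by omega)
  have h2 : Nat.digits (q + 1) (p' * q' * d) = [q + 1 - p', p' - 1] := by
    rw [e2, key p' q hp'1 hp'q]
    exact two_digits_s17 (q + 1) (q + 1 - p') (p' - 1) (by omega) (by omega) (by omega) (by omega)
  refine ⟨h1, h2, ?_, ?_⟩
  · intro i hi
    rw [h1] at hi ⊢
    simp only [List.length_cons, List.length_nil] at hi
    interval_cases i <;> simp [List.getD] <;> omega
  · intro i hi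
    rw [h2] at hi ⊢
    simp only [List.length_cons, List.length_nil] at hi
    interval_cases i <;> simp [List.getD] <;> omega
end

section
/- Let b ≥ 2 and n ≥ 1 be integers. Suppose m is antipalindromic in base b^n with base-b^n digits u_k ... u_0 and leading digit u_k ≥ b^{n-1}. Then m is antipalindromic in base b if and only if for every j ∈ {0,...,k}, the length-n base-b expansion of u_j (padded with leading zeros to length n) is a palindrome. -/
/-- The base-`b` expansion of `u` padded with zeros (at the most significant end,
i.e., appended in the little-endian list) up to length `n`. -/
def paddedDigits (b n u : ℕ) : List ℕ :=
  Nat.digits b u ++ List.replicate (n - (Nat.digits b u).length) 0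

/-- The `i`-th little-endian base-`b` digit of `m` is `m / b ^ i % b`. -/
lemma getD_digits' {b : ℕ} (hb : 2 ≤ b) : ∀ (i m : ℕ),
    (Nat.digits b m).getD i 0 = m / b ^ i % b := by
  intro i
  induction i with
  | zero =>
    intro m
    rcases Nat.eq_zero_or_pos m with h | h
    · simp [h]
    · rw [Nat.digits_def' (by omega : 1 < b) h]; simp
  | succ i ih =>
    intro m
    rcases Nat.eq_zero_or_pos m with h | h
    · simp [h]
    · rw [Nat.digits_def' (by omega : 1 < b) h]
      simp only [List.getD_cons_succ]
      rw [ih (m / b), Nat.div_div_eq_div_mul]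
      congr 2
      rw [pow_succ]; ring

/-- Digitwise complement: digits of `b^n - 1 - u` are `b - 1` minus digits of `u`. -/
lemma dig_compl {b n r u : ℕ} (hb : 2 ≤ b) (hr : r < n) (hu : u < b ^ n) :
    (b ^ n - 1 - u) / b ^ r % b = b - 1 - u / b ^ r % b := by
  set B := b ^ r with hBdef
  set P' := b ^ (n - r - 1) with hP'def
  have hBP : b ^ n = B * (b * P') := by
    rw [hBdef, hP'def, ← pow_succ', ← pow_add]; congr 1; omega
  have hB : 0 < B := pow_pos (by omega : 0 < b) r
  have hP' : 0 < P' := pow_pos (by omega : 0 < b) _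
  set q := u / B with hqdef
  set a := u % B with hadef
  have hu1 : B * q + a = u := Nat.div_add_mod u B
  have ha1 : a < B := Nat.mod_lt _ hB
  have hq1 : q < b * P' := by
    rw [hqdef]
    exact Nat.div_lt_of_lt_mul (by rw [← hBP]; exact hu)
  set c := q % b with hcdef
  set t := q / b with htdef
  have hq2 : b * t + c = q := Nat.div_add_mod q b
  have hc1 : c < b := Nat.mod_lt _ (by omega)
  have ht1 : t < P' := by
    rw [htdef]
    exact Nat.div_lt_of_lt_mul (by omega)
  have key : b ^ n - 1 - u = B * (b * (P' - 1 - t) + (b - 1 - c)) + (B - 1 - a) := by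
    zify [ht1, hc1, ha1, Nat.one_le_iff_ne_zero.mpr, le_of_lt hu,
      Nat.one_le_of_lt hu, (by omega : u ≤ b ^ n - 1), (by omega : 1 ≤ b ^ n),
      (by omega : t ≤ P' - 1), (by omega : 1 ≤ P'), (by omega : c ≤ b - 1),
      (by omega : 1 ≤ b), (by omega : a ≤ B - 1), (by omega : 1 ≤ B)]
    have e1 : (B : ℤ) * q + a = u := by exact_mod_cast hu1
    have e2 : (b : ℤ) * t + c = q := by exact_mod_cast hq2
    have e3 : ((b : ℤ)) ^ n = B * (b * P') := by exact_mod_cast hBP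
    linear_combination e3 + e1 + (B : ℤ) * e2
  rw [key, Nat.mul_add_div hB, Nat.div_eq_of_lt (by omega), add_zero,
    Nat.mul_add_mod, Nat.mod_eq_of_lt (by omega)]

lemma digits_len_le_of_lt_pow {b n u : ℕ} (hb : 2 ≤ b) (hu : u < b ^ n) :
    (Nat.digits b u).length ≤ n := by
  rcases Nat.eq_zero_or_pos u with rfl | hu0
  · simp
  · by_contra h
    have h1 : b ^ (Nat.digits b u).length ≤ b * u :=
      Nat.base_pow_length_digits_le b u (by omega) (by omega)
    have h2 : b * u < b ^ (n + 1) := by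
      rw [pow_succ, mul_comm]
      exact Nat.mul_lt_mul_of_lt_of_le hu (le_refl b) (by omega)
    have := (Nat.pow_lt_pow_iff_right (by omega : 1 < b)).mp (lt_of_le_of_lt h1 h2)
    omega

lemma padded_length {b n u : ℕ} (hb : 2 ≤ b) (hu : u < b ^ n) :
    (paddedDigits b n u).length = n := by
  have := digits_len_le_of_lt_pow hb hu
  simp [paddedDigits]
  omega

lemma padded_getD {b n u : ℕ} (r : ℕ) :
    (paddedDigits b n u).getD r 0 = (Nat.digits b u).getD r 0 := by
  unfold paddedDigits
  rcases lt_or_ge r (Nat.digits b u).length with h | h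
  · rw [List.getD_append _ _ _ _ h]
  · rw [List.getD_append_right _ _ _ _ h, List.getD_eq_default _ _ h]
    rcases lt_or_ge (r - (Nat.digits b u).length) (n - (Nat.digits b u).length) with h2 | h2
    · simp [List.getD, List.getElem?_replicate, h2]
    · exact List.getD_eq_default _ _ (by simpa using h2)

lemma padded_dig {b n u : ℕ} (hb : 2 ≤ b) (r : ℕ) :
    (paddedDigits b n u).getD r 0 = u / b ^ r % b := by
  rw [padded_getD, getD_digits' hb]

/-- The padded digit list is a palindrome iff the digit function is symmetric. -/
lemma pal_iff {b n u : ℕ} (hb : 2 ≤ b) (hu : u < b ^ n) :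
    (paddedDigits b n u).reverse = paddedDigits b n u ↔
      ∀ r < n, u / b ^ r % b = u / b ^ (n - 1 - r) % b := by
  have hlen := padded_length hb hu
  constructor
  · intro h r hr
    have := congrArg (fun l => l.getD r 0) h
    rw [padded_dig hb] at this
    rw [← this, List.getD_eq_getElem _ _ (by rw [List.length_reverse, hlen]; exact hr),
      List.getElem_reverse, ← List.getD_eq_getElem, padded_dig hb, hlen]
  · intro h
    apply List.ext_getElem (by rw [List.length_reverse])
    intro i h1 h2
    rw [List.getElem_reverse, ← List.getD_eq_getElem, ← List.getD_eq_getElem,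
      padded_dig hb, padded_dig hb, hlen]
    exact (h i (by rwa [hlen] at h2)).symm

lemma dig_mod {b n r : ℕ} (hb : 2 ≤ b) (hr : r < n) (x : ℕ) :
    x % b ^ n / b ^ r % b = x / b ^ r % b := by
  conv_rhs => rw [← Nat.div_add_mod x (b ^ n)]
  have h1 : b ^ n * (x / b ^ n) = b ^ r * (b * (b ^ (n - r - 1) * (x / b ^ n))) := by
    calc b ^ n * (x / b ^ n) = b ^ (r + 1 + (n - r - 1)) * (x / b ^ n) := by
          rw [show r + 1 + (n - r - 1) = n from by omega]
    _ = b ^ r * (b * (b ^ (n - r - 1) * (x / b ^ n))) := by rw [pow_add, pow_succ]; ring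
  rw [h1, Nat.mul_add_div (pow_pos (by omega : 0 < b) r), Nat.mul_add_mod]

lemma key_dig {b n r : ℕ} (j m : ℕ) (hb : 2 ≤ b) (hr : r < n) :
    m / b ^ (n * j + r) % b = (m / b ^ (n * j) % b ^ n) / b ^ r % b := by
  rw [dig_mod hb hr, Nat.div_div_eq_div_mul, ← pow_add]

lemma len_digits_eq {b n m : ℕ} (hb : 2 ≤ b) (hn : 1 ≤ n) (hm : 0 < m)
    (hlead : b ^ (n - 1) ≤
      (Nat.digits (b ^ n) m).getD ((Nat.digits (b ^ n) m).length - 1) 0) :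
    (Nat.digits b m).length = n * (Nat.digits (b ^ n) m).length := by
  have hbn : 2 ≤ b ^ n := le_trans hb (Nat.le_self_pow (by omega) b)
  set k' := (Nat.digits (b ^ n) m).length with hk'
  have hk1 : 1 ≤ k' := by
    rw [hk']
    have : Nat.digits (b ^ n) m ≠ [] := Nat.digits_ne_nil_iff_ne_zero.mpr (by omega)
    exact List.length_pos_iff.mpr this
  have hmlt : m < (b ^ n) ^ k' := Nat.lt_base_pow_length_digits (by omega)
  have hdiv : m / (b ^ n) ^ (k' - 1) < b ^ n := by
    apply Nat.div_lt_of_lt_mul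
    calc m < (b ^ n) ^ k' := hmlt
    _ = (b ^ n) ^ (k' - 1) * b ^ n := by
        rw [← pow_succ, show k' - 1 + 1 = k' from by omega]
  have huk : (Nat.digits (b ^ n) m).getD (k' - 1) 0 = m / (b ^ n) ^ (k' - 1) := by
    rw [getD_digits' hbn, Nat.mod_eq_of_lt hdiv]
  rw [huk] at hlead
  have h2 : n * (k' - 1) + n = n * k' := by
    rw [← Nat.mul_succ, show (k'-1).succ = k' from by omega]
  have hp : 0 < n * k' := Nat.mul_pos (by omega) (by omega)
  have hlow : b ^ (n * k' - 1) ≤ m := by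
    calc b ^ (n * k' - 1) = b ^ (n - 1 + n * (k' - 1)) := by
          rw [show n * k' - 1 = n - 1 + n * (k' - 1) from by omega]
    _ = b ^ (n - 1) * (b ^ n) ^ (k' - 1) := by rw [pow_add, pow_mul]
    _ ≤ (m / (b ^ n) ^ (k' - 1)) * (b ^ n) ^ (k' - 1) :=
          Nat.mul_le_mul_right _ hlead
    _ ≤ m := Nat.div_mul_le_self _ _
  have hhigh : m < b ^ (n * k') := by rw [pow_mul]; exact hmlt
  rw [Nat.digits_len b m (by omega) (by omega),
    Nat.log_eq_of_pow_le_of_lt_pow hlow (by rwa [(by omega : n * k' - 1 + 1 = n * k')])]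
  omega

theorem stmt_19 (b n m : ℕ) (hb : 2 ≤ b) (hn : 1 ≤ n) (hm : 0 < m)
    (ha : Antipal (b ^ n) m)
    (hlead : b ^ (n - 1) ≤
      (Nat.digits (b ^ n) m).getD ((Nat.digits (b ^ n) m).length - 1) 0) :
    Antipal b m ↔
      ∀ j < (Nat.digits (b ^ n) m).length,
        (paddedDigits b n ((Nat.digits (b ^ n) m).getD j 0)).reverse =
          paddedDigits b n ((Nat.digits (b ^ n) m).getD j 0) := by
  have hbn : 2 ≤ b ^ n := le_trans hb (Nat.le_self_pow (by omega) b)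
  set k' := (Nat.digits (b ^ n) m).length with hk'
  have hk1 : 1 ≤ k' := by
    rw [hk']
    exact List.length_pos_iff.mpr (Nat.digits_ne_nil_iff_ne_zero.mpr (by omega))
  have hlen : (Nat.digits b m).length = n * k' := len_digits_eq hb hn hm hlead
  have hdig : ∀ j : ℕ, m / b ^ (n * j) % b ^ n < b ^ n := fun j => Nat.mod_lt _ (by omega)
  unfold Antipal at ha ⊢
  simp only [getD_digits' hbn, ← pow_mul, ← hk'] at ha ⊢
  simp only [getD_digits' hb, hlen]
  have hc : ∀ j, j < k' →
      m / b ^ (n * (k' - 1 - j)) % b ^ n = b ^ n - 1 - m / b ^ (n * j) % b ^ n := by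
    intro j hj
    have h1 := ha j hj
    have h2 := hdig (k' - 1 - j)
    have h3 := hdig j
    omega
  have hsum : ∀ j, j < k' → n * j + n * (k' - 1 - j) + n = n * k' := by
    intro j hj
    calc n * j + n * (k' - 1 - j) + n = n * (j + (k' - 1 - j) + 1) := by ring
    _ = n * k' := by rw [show j + (k' - 1 - j) + 1 = k' from by omega]
  have core : ∀ j r, j < k' → r < n →
      m / b ^ (n * k' - 1 - (n * j + r)) % b =
        b - 1 - (m / b ^ (n * j) % b ^ n) / b ^ (n - 1 - r) % b := by
    intro j r hj hr
    have hs := hsum j hj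
    have hidx : n * k' - 1 - (n * j + r) = n * (k' - 1 - j) + (n - 1 - r) := by omega
    rw [hidx, key_dig _ m hb (show n - 1 - r < n by omega), hc j hj,
      dig_compl hb (show n - 1 - r < n by omega) (hdig j)]
  constructor
  · intro H j hj
    rw [pal_iff hb (hdig j)]
    intro r hr
    have hs := hsum j hj
    have hi : n * j + r < n * k' := by omega
    have h1 := H (n * j + r) hi
    rw [key_dig j m hb hr, core j r hj hr] at h1
    have h2 : (m / b ^ (n * j) % b ^ n) / b ^ (n - 1 - r) % b < b := Nat.mod_lt _ (by omega)
    omega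
  · intro H i hi
    have hr : i % n < n := Nat.mod_lt _ (by omega)
    have hij : n * (i / n) + i % n = i := Nat.div_add_mod i n
    have hj : i / n < k' := by
      rw [Nat.div_lt_iff_lt_mul (by omega : 0 < n), mul_comm k' n]
      exact hi
    rw [← hij, key_dig (i / n) m hb hr, core (i / n) (i % n) hj hr]
    have hp := (pal_iff hb (hdig (i / n))).mp (H (i / n) hj) (i % n) hr
    have h2 : (m / b ^ (n * (i / n)) % b ^ n) / b ^ (i % n) % b < b := Nat.mod_lt _ (by omega)
    omega
end
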